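/- Define, for positive reals r_i, r_j, r_k, r_h with t_ν = tanh r_ν, λ_1 = t_it_j + t_it_k + t_jt_k + 1, λ_2 = t_it_j + t_it_h + t_jt_h + 1, the dihedral angle β_{ij,kh}(r_i, r_j, r_k, r_h) = arccos((2 − t_i^2 − t_j^2 + t_it_k + t_it_h + t_jt_k + t_jt_h)/(2√(λ_1λ_2))). Then for fixed r_j, r_k, r_h > 0, the function r_i ↦ β_{ij,kh} has, at every r_i > 0, derivative equal to cosh^2 r_j · cosh r_k · cosh r_h · H_j / (2√Q_2 · cosh(r_i + r_j + r_k) · cosh(r_i + r_j + r_h)), where Q_2 = (t_i+t_j+t_k+t_h)^2 − 2(t_i^2+t_j^2+t_k^2+t_h^2) + 4 and H_j = 2t_i^2t_j^2 + t_j^2t_k^2 + t_j^2t_h^2 + 2t_i^2t_jt_k + 2t_i^2t_jt_h + 2t_i^2t_kt_h + t_it_j^2t_k + t_it_j^2t_h + 4t_it_jt_kt_h − 2t_it_j^3 − t_j^3t_k − t_j^3t_h − 2t_j^2 − t_k^2 − t_h^2 + 6t_it_j + 3t_it_k + 3t_it_h + 3t_jt_k + 3t_jt_h + 2t_kt_h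 + 4. -/

import Mathlib

open Real

set_option maxHeartbeats 2000000 in
theorem beta_aux_t (t tj tk th : ℝ)
    (ht0 : 0 < t) (ht1 : t < 1) (htj0 : 0 < tj) (htj1 : tj < 1)
    (htk0 : 0 < tk) (htk1 : tk < 1) (hth0 : 0 < th) (hth1 : th < 1) :
    HasDerivAt
      (fun s : ℝ => arccos
        ((2 - s ^ 2 - tj ^ 2 + s * tk + s * th + tj * tk + tj * th) /
          (2 * Real.sqrt ((s * tj + s * tk + tj * tk + 1) *
            (s * tj + s * th + tj * th + 1)))))
      ((2 * t ^ 2 * tj ^ 2 + tj ^ 2 * tk ^ 2 + tj ^ 2 * th ^ 2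
        + 2 * t ^ 2 * tj * tk + 2 * t ^ 2 * tj * th + 2 * t ^ 2 * tk * th
        + t * tj ^ 2 * tk + t * tj ^ 2 * th + 4 * t * tj * tk * th
        - 2 * t * tj ^ 3 - tj ^ 3 * tk - tj ^ 3 * th - 2 * tj ^ 2 - tk ^ 2 - th ^ 2
        + 6 * t * tj + 3 * t * tk + 3 * t * th + 3 * tj * tk + 3 * tj * th
        + 2 * tk * th + 4) /
       (2 * Real.sqrt ((t + tj + tk + th) ^ 2 - 2 * (t ^ 2 + tj ^ 2 + tk ^ 2 + th ^ 2) + 4)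
        * (t * tj + t * tk + tj * tk + 1) * (t * tj + t * th + tj * th + 1)))
      t := by
  -- derivative building blocks (fully explicit)
  have hNd : HasDerivAt (fun s : ℝ => 2 - s^2 - tj^2 + s*tk + s*th + tj*tk + tj*th) (tk + th - 2*t) t := by
    have h := (((((hasDerivAt_pow 2 t).const_sub 2).sub_const (tj^2)).add
        ((hasDerivAt_id t).mul_const tk)).add ((hasDerivAt_id t).mul_const th)).add_const (tj*tk) |>.add_const (tj*th)
    refine h.congr_deriv ?_
    push_cast
    ring
  have hAd : HasDerivAt (fun s : ℝ => s*tj + s*tk + tj*tk + 1) (tj + tk) t := by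
    simpa using ((((hasDerivAt_id t).mul_const tj).add ((hasDerivAt_id t).mul_const tk)).add_const (tj*tk)).add_const 1
  have hBd : HasDerivAt (fun s : ℝ => s*tj + s*th + tj*th + 1) (tj + th) t := by
    simpa using ((((hasDerivAt_id t).mul_const tj).add ((hasDerivAt_id t).mul_const th)).add_const (tj*th)).add_const 1
  have hApos : (0:ℝ) < t * tj + t * tk + tj * tk + 1 := by positivity
  have hBpos : (0:ℝ) < t * tj + t * th + tj * th + 1 := by positivity
  have hPpos : (0:ℝ) < (t * tj + t * tk + tj * tk + 1) * (t * tj + t * th + tj * th + 1) :=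
    mul_pos hApos hBpos
  have hQpos : (0:ℝ) < (t + tj + tk + th) ^ 2 - 2 * (t ^ 2 + tj ^ 2 + tk ^ 2 + th ^ 2) + 4 := by
    have e1 : t^2 < 1 := by nlinarith
    have e2 : tj^2 < 1 := by nlinarith
    have e3 : tk^2 < 1 := by nlinarith
    have e4 : th^2 < 1 := by nlinarith
    nlinarith [mul_pos ht0 htj0, mul_pos ht0 htk0, mul_pos ht0 hth0, mul_pos htj0 htk0,
      mul_pos htj0 hth0, mul_pos htk0 hth0]
  have hud : HasDerivAt (fun s : ℝ =>
      (2 - s^2 - tj^2 + s*tk + s*th + tj*tk + tj*th) /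
        (2 * Real.sqrt ((s*tj + s*tk + tj*tk + 1) * (s*tj + s*th + tj*th + 1))))
      (((tk + th - 2*t) * (2 * Real.sqrt ((t*tj + t*tk + tj*tk + 1) * (t*tj + t*th + tj*th + 1)))
        - (2 - t^2 - tj^2 + t*tk + t*th + tj*tk + tj*th) *
          (2 * (((tj + tk) * (t*tj + t*th + tj*th + 1) + (t*tj + t*tk + tj*tk + 1) * (tj + th)) /
            (2 * Real.sqrt ((t*tj + t*tk + tj*tk + 1) * (t*tj + t*th + tj*th + 1))))))
        / (2 * Real.sqrt ((t*tj + t*tk + tj*tk + 1) * (t*tj + t*th + tj*th + 1)))^2) t :=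
    hNd.div (((hAd.mul hBd).sqrt hPpos.ne').const_mul 2) (by positivity)
  -- abbreviations
  set Hj0 : ℝ := 2 * t ^ 2 * tj ^ 2 + tj ^ 2 * tk ^ 2 + tj ^ 2 * th ^ 2
        + 2 * t ^ 2 * tj * tk + 2 * t ^ 2 * tj * th + 2 * t ^ 2 * tk * th
        + t * tj ^ 2 * tk + t * tj ^ 2 * th + 4 * t * tj * tk * th
        - 2 * t * tj ^ 3 - tj ^ 3 * tk - tj ^ 3 * th - 2 * tj ^ 2 - tk ^ 2 - th ^ 2
        + 6 * t * tj + 3 * t * tk + 3 * t * th + 3 * tj * tk + 3 * tj * th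
        + 2 * tk * th + 4 with hHj0
  set A : ℝ := t * tj + t * tk + tj * tk + 1 with hA
  set B : ℝ := t * tj + t * th + tj * th + 1 with hB
  set Nv : ℝ := 2 - t ^ 2 - tj ^ 2 + t * tk + t * th + tj * tk + tj * th with hNv
  set Q : ℝ := (t + tj + tk + th) ^ 2 - 2 * (t ^ 2 + tj ^ 2 + tk ^ 2 + th ^ 2) + 4 with hQ
  set S : ℝ := Real.sqrt (A * B) with hS
  have hSpos : 0 < S := Real.sqrt_pos.mpr hPpos
  have hss : S ^ 2 = A * B := Real.sq_sqrt hPpos.le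
  have hqq : (Real.sqrt Q) ^ 2 = Q := Real.sq_sqrt hQpos.le
  have hQspos : 0 < Real.sqrt Q := Real.sqrt_pos.mpr hQpos
  have htij : 0 < t + tj := by linarith
  -- key algebraic identities
  have key1 : 4 * (A * B) - Nv ^ 2 = Q * (t + tj) ^ 2 := by rw [hA, hB, hNv, hQ]; ring
  have key2 : (tk + th - 2*t) * (2 * (A * B)) - Nv * ((tj + tk) * B + A * (tj + th))
      = -((t + tj) * Hj0) := by rw [hA, hB, hNv, hHj0]; ring
  have h4 : 1 - (Nv / (2*S))^2 = ((t + tj) * Real.sqrt Q / (2*S))^2 := by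
    rw [div_pow, div_pow, mul_pow 2 S, mul_pow (t+tj), hss, hqq]
    rw [eq_div_iff (by positivity : (2:ℝ)^2 * (A*B) ≠ 0)]
    field_simp
    linarith [key1]
  have hupos : (0:ℝ) < (t + tj) * Real.sqrt Q / (2*S) := by positivity
  have husq : (Nv / (2*S))^2 < 1 := by nlinarith [pow_pos hupos 2, h4]
  have hne1 : Nv / (2*S) ≠ -1 := by intro h; rw [h] at husq; norm_num at husq
  have hne2 : Nv / (2*S) ≠ 1 := by intro h; rw [h] at husq; norm_num at husq
  have hfin := (Real.hasDerivAt_arccos hne1 hne2).comp t hud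
  clear_value A B Nv Q S Hj0
  have hval : ((tk + th - 2*t) * (2 * S)
        - Nv * (2 * (((tj + tk) * B + A * (tj + th)) / (2 * S)))) / (2 * S)^2
      = -((t + tj) * Hj0) / (4 * (A * B) * S) := by
    field_simp
    linear_combination (8*(A*B)*(tk + th - 2*t) + 4*(t+tj)*Hj0) * hss + (4*(A*B)) * key2
  have hsq1 : Real.sqrt (1 - (Nv / (2*S))^2) = (t + tj) * Real.sqrt Q / (2*S) := by
    rw [h4, Real.sqrt_sq hupos.le]
  refine hfin.congr_deriv ?_
  symm
  rw [hsq1, hval]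
  field_simp
  ring


theorem tanh_hasDerivAt (x : ℝ) : HasDerivAt Real.tanh (1 - Real.tanh x ^ 2) x := by
  have h := (Real.hasDerivAt_sinh x).div (Real.hasDerivAt_cosh x) (Real.cosh_pos x).ne'
  have heq : Real.tanh = fun y => Real.sinh y / Real.cosh y :=
    funext fun y => Real.tanh_eq_sinh_div_cosh y
  rw [heq]
  refine h.congr_deriv ?_
  symm
  have hc := (Real.cosh_pos x).ne'
  simp only []
  field_simp

theorem tanh_pos' {x : ℝ} (hx : 0 < x) : 0 < Real.tanh x := by
  rw [Real.tanh_eq_sinh_div_cosh]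
  exact div_pos (by rwa [Real.sinh_pos_iff]) (Real.cosh_pos x)

theorem tanh_lt_one' (x : ℝ) : Real.tanh x < 1 := by
  rw [Real.tanh_eq_sinh_div_cosh, div_lt_one (Real.cosh_pos x)]
  linarith [Real.cosh_sub_sinh x, Real.exp_pos (-x)]

theorem cosh_add_three (a b c : ℝ) :
    Real.cosh (a + b + c) = Real.cosh a * Real.cosh b * Real.cosh c *
      (Real.tanh a * Real.tanh b + Real.tanh a * Real.tanh c + Real.tanh b * Real.tanh c + 1) := by
  have ha := (Real.cosh_pos a).ne'
  have hb := (Real.cosh_pos b).ne'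
  have hc := (Real.cosh_pos c).ne'
  rw [Real.cosh_add, Real.cosh_add, Real.sinh_add, Real.tanh_eq_sinh_div_cosh,
    Real.tanh_eq_sinh_div_cosh, Real.tanh_eq_sinh_div_cosh]
  field_simp
  ring




set_option maxHeartbeats 2000000 in
/-- Proposition 3.3 of the paper: the derivative of the dihedral angle
`β_{ij,kh}` with respect to `r_i` equals
`cosh² r_j · cosh r_k · cosh r_h · H_j / (2√Q₂ · cosh(r_i+r_j+r_k) · cosh(r_i+r_j+r_h))`. -/
theorem deriv_beta_ri (ri rj rk rh : ℝ)
    (hri : 0 < ri) (hrj : 0 < rj) (hrk : 0 < rk) (hrh : 0 < rh)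
    (ti tj tk th Q2 Hj : ℝ)
    (hti : ti = tanh ri) (htj : tj = tanh rj) (htk : tk = tanh rk) (hth : th = tanh rh)
    (hQ2 : Q2 = (ti + tj + tk + th) ^ 2 - 2 * (ti ^ 2 + tj ^ 2 + tk ^ 2 + th ^ 2) + 4)
    (hHj : Hj = 2 * ti ^ 2 * tj ^ 2 + tj ^ 2 * tk ^ 2 + tj ^ 2 * th ^ 2
        + 2 * ti ^ 2 * tj * tk + 2 * ti ^ 2 * tj * th + 2 * ti ^ 2 * tk * th
        + ti * tj ^ 2 * tk + ti * tj ^ 2 * th + 4 * ti * tj * tk * th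
        - 2 * ti * tj ^ 3 - tj ^ 3 * tk - tj ^ 3 * th - 2 * tj ^ 2 - tk ^ 2 - th ^ 2
        + 6 * ti * tj + 3 * ti * tk + 3 * ti * th + 3 * tj * tk + 3 * tj * th
        + 2 * tk * th + 4) :
    HasDerivAt
      (fun x : ℝ => arccos
        ((2 - tanh x ^ 2 - tj ^ 2 + tanh x * tk + tanh x * th + tj * tk + tj * th) /
          (2 * Real.sqrt ((tanh x * tj + tanh x * tk + tj * tk + 1) *
            (tanh x * tj + tanh x * th + tj * th + 1)))))
      (cosh rj ^ 2 * cosh rk * cosh rh * Hj /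
        (2 * Real.sqrt Q2 * cosh (ri + rj + rk) * cosh (ri + rj + rh)))
      ri := by
  have hti0 : 0 < ti := hti ▸ tanh_pos' hri
  have hti1 : ti < 1 := hti ▸ tanh_lt_one' ri
  have htj0 : 0 < tj := htj ▸ tanh_pos' hrj
  have htj1 : tj < 1 := htj ▸ tanh_lt_one' rj
  have htk0 : 0 < tk := htk ▸ tanh_pos' hrk
  have htk1 : tk < 1 := htk ▸ tanh_lt_one' rk
  have hth0 : 0 < th := hth ▸ tanh_pos' hrh
  have hth1 : th < 1 := hth ▸ tanh_lt_one' rh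
  have haux := beta_aux_t (Real.tanh ri) tj tk th (hti ▸ hti0) (hti ▸ hti1)
    htj0 htj1 htk0 htk1 hth0 hth1
  have hcomp := haux.comp ri (tanh_hasDerivAt ri)
  refine hcomp.congr_deriv ?_
  symm
  rw [← hti]
  rw [← hQ2, ← hHj]
  have hc1 : Real.cosh (ri + rj + rk)
      = Real.cosh ri * Real.cosh rj * Real.cosh rk * (ti * tj + ti * tk + tj * tk + 1) := by
    rw [cosh_add_three, ← hti, ← htj, ← htk]
  have hc2 : Real.cosh (ri + rj + rh)
      = Real.cosh ri * Real.cosh rj * Real.cosh rh * (ti * tj + ti * th + tj * th + 1) := by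
    rw [cosh_add_three, ← hti, ← htj, ← hth]
  rw [hc1, hc2]
  have hsech : (1 - ti ^ 2) * Real.cosh ri ^ 2 = 1 := by
    rw [hti, Real.tanh_eq_sinh_div_cosh]
    have hc := (Real.cosh_pos ri).ne'
    field_simp
    exact Real.cosh_sq_sub_sinh_sq ri
  have hQ2pos : 0 < Q2 := by
    have e1 : ti^2 < 1 := by nlinarith [sq_nonneg (1 - ti), sq_nonneg (1 + ti)]
    have e2 : tj^2 < 1 := by nlinarith [sq_nonneg (1 - tj), sq_nonneg (1 + tj)]
    have e3 : tk^2 < 1 := by nlinarith [sq_nonneg (1 - tk), sq_nonneg (1 + tk)]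
    have e4 : th^2 < 1 := by nlinarith [sq_nonneg (1 - th), sq_nonneg (1 + th)]
    rw [hQ2]
    nlinarith [mul_pos hti0 htj0, mul_pos hti0 htk0, mul_pos hti0 hth0, mul_pos htj0 htk0,
      mul_pos htj0 hth0, mul_pos htk0 hth0]
  have hQs : 0 < Real.sqrt Q2 := Real.sqrt_pos.mpr hQ2pos
  have hApos : (0:ℝ) < ti * tj + ti * tk + tj * tk + 1 := by positivity
  have hBpos : (0:ℝ) < ti * tj + ti * th + tj * th + 1 := by positivity
  have h1 := (Real.cosh_pos ri).ne'
  have h2 := (Real.cosh_pos rj).ne'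
  have h3 := (Real.cosh_pos rk).ne'
  have h4 := (Real.cosh_pos rh).ne'
  field_simp
  linear_combination (-Hj) * hsech
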